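/- arXiv:2108.10756 — 10 statements merged into one kernel-verified Lean document; each statement's English description precedes it below -/
import Mathlib

section
/- Let λ be a real number with λ ≠ 0 and λ ≠ 1, and let z be a complex number with z ≠ 0, z ≠ 1, |z| < 1 and |((λ-1)/λ)·z| < 1. Then the series Σ_{n=0}^{∞} (1-λ)^{n+2} · y(n,λ) · z^n converges and equals log(1 - ((λ-1)/λ)·z) / (z·(z-1)), where log denotes the principal branch of the complex logarithm. -/
/-!
Splitting `(1-λ)^(n+2)` against the powers of `λ - 1` in `y(n,λ)` shows that the coefficient of
`z^n` is the partial sum `∑_{j ≤ n} μ^(j+1)/(j+1)` with `μ = (λ-1)/λ`. Multiplying a power series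
by `∑ z^n = 1/(1-z)` turns its coefficients into their partial sums, and
`∑ μ^(j+1) z^j/(j+1) = -log(1 - μz)/z` is the Taylor series of the logarithm.
-/

/-- The numbers `y(n,λ)` from the paper:
`y(n,λ) = ∑_{j=0}^{n} (-1)^n / ((j+1) · λ^{j+1} · (λ-1)^{n+1-j})`. -/
noncomputable def ynum (n : ℕ) (l : ℝ) : ℝ :=
  ∑ j ∈ Finset.range (n + 1),
    (-1 : ℝ) ^ n / ((j + 1) * l ^ (j + 1) * (l - 1) ^ (n + 1 - j))

open Finset

lemma one_sub_pow_mul_ynum {l : ℝ} (hl0 : l ≠ 0) (hl1 : l ≠ 1) (n : ℕ) :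
    (1 - l) ^ (n + 2) * ynum n l = ∑ j ∈ range (n + 1), ((l - 1) / l) ^ (j + 1) / (j + 1) := by
  have hl1' : l - 1 ≠ 0 := sub_ne_zero.mpr hl1
  rw [ynum, mul_sum]
  refine sum_congr rfl fun j hj => ?_
  have hjn : j ≤ n := Nat.lt_succ_iff.mp (mem_range.mp hj)
  have hsign : (1 - l) ^ (n + 2) * (-1) ^ n = (l - 1) ^ (n + 2) := by
    rw [show 1 - l = -(l - 1) by ring, neg_pow, mul_right_comm, ← pow_add,
      Even.neg_one_pow ⟨n + 1, by ring⟩, one_mul]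
  have hsplit : (l - 1) ^ (n + 2) = (l - 1) ^ (j + 1) * (l - 1) ^ (n + 1 - j) := by
    rw [← pow_add]; congr 1; omega
  rw [mul_div_assoc', hsign, hsplit, div_pow]
  field_simp

theorem HasSum.sum_range_mul_geometric {K : Type*} [NormedDivisionRing K] [CompleteSpace K]
    {a : ℕ → K} {s z : K} (ha : HasSum (fun n => a n * z ^ n) s)
    (ha' : Summable fun n => ‖a n * z ^ n‖) (hz : ‖z‖ < 1) :
    HasSum (fun n => (∑ j ∈ range (n + 1), a j) * z ^ n) (s * (1 - z)⁻¹) := by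
  have hgeom : Summable fun n => ‖z ^ n‖ := by
    simpa only [norm_pow] using summable_geometric_of_lt_one (norm_nonneg z) hz
  have hcauchy := hasSum_sum_range_mul_of_summable_norm ha' hgeom
  rw [ha.tsum_eq, (hasSum_geometric_of_norm_lt_one hz).tsum_eq] at hcauchy
  convert hcauchy using 2 with n
  rw [sum_mul]
  refine sum_congr rfl fun j hj => ?_
  rw [mul_assoc, pow_mul_pow_sub z (Nat.lt_succ_iff.mp (mem_range.mp hj))]

namespace Complex

lemma hasSum_pow_succ_div_mul_pow {μ z : ℂ} (hz : z ≠ 0) (hμz : ‖μ * z‖ < 1) :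
    HasSum (fun n : ℕ => μ ^ (n + 1) / (n + 1) * z ^ n) (-log (1 - μ * z) / z) := by
  refine ((hasSum_taylorSeries_neg_log' hμz).div_const z).congr_fun fun n => ?_
  rw [mul_pow, pow_succ z]
  field_simp

lemma summable_norm_pow_succ_div_mul_pow {μ z : ℂ} (hμz : ‖μ * z‖ < 1) :
    Summable fun n : ℕ => ‖μ ^ (n + 1) / (n + 1) * z ^ n‖ := by
  refine .of_nonneg_of_le (fun _ => norm_nonneg _) (fun n => ?_)
    ((summable_geometric_of_lt_one (norm_nonneg _) hμz).mul_left ‖μ‖)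
  have hn : (1 : ℝ) ≤ ‖(n + 1 : ℂ)‖ := by
    rw [← Nat.cast_succ, norm_natCast]; exact_mod_cast n.succ_pos
  calc ‖μ ^ (n + 1) / (n + 1) * z ^ n‖ = ‖μ‖ * ‖μ * z‖ ^ n / ‖(n + 1 : ℂ)‖ := by
        rw [norm_mul, norm_div, norm_pow, norm_pow, norm_mul, mul_pow]; ring
    _ ≤ ‖μ‖ * ‖μ * z‖ ^ n := div_le_self (by positivity) hn

end Complex

theorem stmt_0 (l : ℝ) (hl0 : l ≠ 0) (hl1 : l ≠ 1) (z : ℂ)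
    (hz0 : z ≠ 0) (hz1 : z ≠ 1) (hz : ‖z‖ < 1)
    (hz2 : ‖(((l - 1) / l : ℝ) : ℂ) * z‖ < 1) :
    HasSum (fun n : ℕ => (((1 - l) ^ (n + 2) * ynum n l : ℝ) : ℂ) * z ^ n)
      (Complex.log (1 - (((l - 1) / l : ℝ) : ℂ) * z) / (z * (z - 1))) := by
  set μ : ℂ := (((l - 1) / l : ℝ) : ℂ)
  have hcoeff (n : ℕ) : (((1 - l) ^ (n + 2) * ynum n l : ℝ) : ℂ) =
      ∑ j ∈ range (n + 1), μ ^ (j + 1) / (j + 1) := by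
    rw [one_sub_pow_mul_ynum hl0 hl1]
    simp [μ]
  have hvalue : Complex.log (1 - μ * z) / (z * (z - 1)) =
      -Complex.log (1 - μ * z) / z * (1 - z)⁻¹ := by
    have h1z : 1 - z ≠ 0 := sub_ne_zero.mpr hz1.symm
    have hz1' : z - 1 ≠ 0 := sub_ne_zero.mpr hz1
    field_simp
    ring
  rw [hvalue]
  exact ((Complex.hasSum_pow_succ_div_mul_pow hz0 hz2).sum_range_mul_geometric
    (Complex.summable_norm_pow_succ_div_mul_pow hz2) hz).congr_fun fun n => by rw [hcoeff]
end

section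
/- Let m be a nonnegative integer and let λ be a real number with λ ≠ 0 and λ ≠ 1. Then y(m,λ) = Σ_{v=0}^{m} Σ_{n=0}^{v} (-1)^{v-m} · (λ-1)^{v-m-1} · B_n · S₁(v,n) / (λ^{v+1} · v!). -/
/-- The signed Stirling numbers of the first kind, defined by the recurrence
`S₁(n+1,k) = S₁(n,k-1) - n·S₁(n,k)`, equivalently by
`∑_{k=0}^{n} S₁(n,k)·x^k = x·(x-1)···(x-n+1)`. -/
def S1 : ℕ → ℕ → ℤ
  | 0, 0 => 1
  | 0, _ + 1 => 0
  | n + 1, 0 => -(n : ℤ) * S1 n 0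
  | n + 1, k + 1 => S1 n k - (n : ℤ) * S1 n (k + 1)


open Polynomial hiding bernoulli sum_bernoulli
open Finset

theorem descPochhammer_coeff_eq_S1 (R : Type*) [CommRing R] (v n : ℕ) :
    (descPochhammer R v).coeff n = S1 v n := by
  induction v generalizing n with
  | zero => cases n <;> simp [S1, coeff_one]
  | succ v ih =>
    rw [descPochhammer_succ_right, mul_sub, coeff_sub, ← C_eq_natCast, coeff_mul_C]
    cases n with
    | zero => simp [S1, ih, mul_comm]
    | succ n => simp only [coeff_mul_X, S1, ih]; push_cast; ring

theorem S1_succ_zero (v : ℕ) : S1 (v + 1) 0 = 0 := by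
  induction v with
  | zero => simp [S1]
  | succ v ih => rw [S1, ih, mul_zero]

theorem S1_succ_one (v : ℕ) : S1 (v + 1) 1 = (-1) ^ v * v.factorial := by
  induction v with
  | zero => simp [S1]
  | succ v ih =>
    rw [S1, S1_succ_zero, ih, Nat.factorial_succ]
    push_cast; ring

theorem descPochhammer_succ_comp_X_add_one (R : Type*) [CommRing R] (v : ℕ) :
    (descPochhammer R (v + 1)).comp (X + 1) =
      descPochhammer R (v + 1) + ((v : R) + 1) • descPochhammer R v := by
  have hcomp : (descPochhammer R (v + 1)).comp (X + 1) = (X + 1) * descPochhammer R v := by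
    rw [descPochhammer_succ_left, mul_comp, X_comp, comp_assoc, sub_comp, X_comp, one_comp,
      add_sub_cancel_right, comp_X]
  rw [hcomp, descPochhammer_succ_right, smul_eq_C_mul, map_add, map_one, map_natCast]
  ring

/-- The umbral evaluation `X ^ n ↦ B n`. -/
def bernoulliUmbral : ℚ[X] →ₗ[ℚ] ℚ := lsum fun n => bernoulli n • LinearMap.id

theorem bernoulliUmbral_apply (p : ℚ[X]) {N : ℕ} (hp : p.natDegree < N) :
    bernoulliUmbral p = ∑ n ∈ range N, bernoulli n * p.coeff n := by
  rw [bernoulliUmbral, lsum_apply, sum_over_range' _ (by simp) N hp]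
  simp

theorem bernoulliUmbral_monomial (n : ℕ) (a : ℚ) :
    bernoulliUmbral (monomial n a) = bernoulli n * a := by
  simp [bernoulliUmbral]

/-- The umbral form of `∑_{n<k} (k choose n) B n = [k = 1]`. -/
theorem bernoulliUmbral_taylor_one (p : ℚ[X]) :
    bernoulliUmbral (taylor 1 p) = bernoulliUmbral p + p.coeff 1 := by
  suffices bernoulliUmbral ∘ₗ taylor 1 = bernoulliUmbral + lcoeff ℚ 1 from
    LinearMap.congr_fun this p
  ext k
  rw [LinearMap.comp_apply, LinearMap.comp_apply, taylor_monomial, map_one, one_mul,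
    bernoulliUmbral_apply _ (N := k + 1) (by rw [← C_1, natDegree_pow_X_add_C]; omega)]
  simp only [coeff_X_add_one_pow, sum_range_succ, mul_comm (bernoulli _), sum_bernoulli,
    Nat.choose_self]
  simp [bernoulliUmbral_monomial, coeff_monomial, add_comm]

theorem sum_bernoulli_mul_S1 (v : ℕ) :
    ∑ n ∈ range (v + 1), bernoulli n * (S1 v n : ℚ) = (-1) ^ v * v.factorial / (v + 1) := by
  have hshift := bernoulliUmbral_taylor_one (descPochhammer ℚ (v + 1))
  rw [taylor_apply, C_1, descPochhammer_succ_comp_X_add_one, map_add, map_smul, add_right_inj,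
    descPochhammer_coeff_eq_S1, S1_succ_one, bernoulliUmbral_apply _ (N := v + 1)
      (by rw [descPochhammer_natDegree]; omega)] at hshift
  simp only [descPochhammer_coeff_eq_S1, smul_eq_mul] at hshift
  rw [eq_div_iff (by positivity), mul_comm]
  exact_mod_cast hshift

theorem stmt_2 (m : ℕ) (l : ℝ) (hl0 : l ≠ 0) (hl1 : l ≠ 1) :
    ynum m l = ∑ v ∈ Finset.range (m + 1), ∑ n ∈ Finset.range (v + 1),
      (-1 : ℝ) ^ ((v : ℤ) - (m : ℤ)) * (l - 1) ^ ((v : ℤ) - (m : ℤ) - 1) *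
        (bernoulli n : ℝ) * (S1 v n : ℝ) / (l ^ (v + 1) * (v.factorial : ℝ)) := by
  have hl1' : l - 1 ≠ 0 := sub_ne_zero.mpr hl1
  have hS1 (v : ℕ) : ∑ n ∈ range (v + 1), (bernoulli n : ℝ) * S1 v n =
      (-1) ^ v * v.factorial / (v + 1) := by
    exact_mod_cast congrArg (Rat.cast : ℚ → ℝ) (sum_bernoulli_mul_S1 v)
  refine sum_congr rfl fun v hv => ?_
  obtain ⟨k, rfl⟩ := Nat.exists_eq_add_of_le (Nat.lt_succ_iff.mp (mem_range.mp hv))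
  have hfactor (a b c d : ℝ) : a * b * c * d / (l ^ (v + 1) * (v.factorial : ℝ)) =
      a * b / (l ^ (v + 1) * (v.factorial : ℝ)) * (c * d) := by ring
  simp_rw [hfactor, ← mul_sum, hS1]
  have hexp : (v : ℤ) - (v + k : ℕ) = -k := by push_cast; ring
  rw [hexp, zpow_sub_one₀ hl1', zpow_neg, zpow_neg, zpow_natCast, zpow_natCast,
    show v + k + 1 - v = k + 1 by omega]
  field_simp
  have hsign : ((-1 : ℝ) ^ k) * (-1) ^ k = 1 := by rw [← mul_pow]; norm_num
  linear_combination (-1) ^ v * (l - 1) ^ (k + 1) * hsign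
end

section
/- Let n ≥ 1 be an integer and let λ be a real number with λ ≠ 0 and λ ≠ 1. Then H_{2n+2} - H_{n+1} = -1/(2(n+1)) + (n+1)·Σ_{k=0}^{2n-1} λ^{k+2}·y(k,λ)/(2n-k) + (n+1)·(λ-1)·Σ_{k=0}^{2n} λ^{k+1}·y(k,λ)/(2n+1-k). -/
/-- The harmonic numbers `H_n = ∑_{k=1}^{n} 1/k` (with `H_0 = 0`). -/
noncomputable def harm (n : ℕ) : ℝ := ∑ k ∈ Finset.range n, 1 / ((k : ℝ) + 1)


/-!
With `u k = λ ^ (k + 1) * y(k, λ)`, the definition of `y` gives the recurrence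
`λ u k + (λ - 1) u (k + 1) = (-1) ^ (k + 1) / (k + 2)` and `(λ - 1) u 0 = 1`. Shifting the index in
the second sum therefore collapses the right-hand side to the convolution
`∑_{k ≤ 2n} (-1)^k / ((k + 1)(2n + 1 - k))`. Partial fractions and the reflection `k ↦ 2n - k` turn
this into `(n + 1)⁻¹ ∑_{k ≤ 2n} (-1)^k / (k + 1)`, and that alternating harmonic sum is
`H_{2n+2} - H_{n+1} + 1 / (2n + 2)`.
-/

open Finset

lemma harm_succ (n : ℕ) : harm (n + 1) = harm n + 1 / ((n : ℝ) + 1) := by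
  simp only [harm, sum_range_succ]

lemma sum_range_neg_one_pow_div_eq_harm_sub (n : ℕ) :
    ∑ k ∈ range (2 * n), (-1 : ℝ) ^ k / ((k : ℝ) + 1) = harm (2 * n) - harm n := by
  induction n with
  | zero => simp [harm]
  | succ n ih =>
    have hn : (2 * (n : ℝ) + 2) ≠ 0 := by positivity
    rw [show 2 * (n + 1) = 2 * n + 1 + 1 by ring, sum_range_succ, sum_range_succ, ih,
      harm_succ, harm_succ, harm_succ, pow_succ, pow_mul, neg_one_sq, one_pow]
    push_cast
    field_simp
    ring

lemma sub_one_mul_ynum_succ_term (n j : ℕ) (l : ℝ) (hl1 : l ≠ 1) (hj : j < n + 1) :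
    (l - 1) * ((-1 : ℝ) ^ (n + 1) / ((j + 1) * l ^ (j + 1) * (l - 1) ^ (n + 1 + 1 - j))) =
      -((-1 : ℝ) ^ n / ((j + 1) * l ^ (j + 1) * (l - 1) ^ (n + 1 - j))) := by
  have hl1' : l - 1 ≠ 0 := sub_ne_zero.mpr hl1
  rw [show n + 1 + 1 - j = n + 1 - j + 1 by omega, pow_succ, pow_succ]
  field_simp
  ring

lemma sub_one_mul_ynum_succ (n : ℕ) (l : ℝ) (hl1 : l ≠ 1) :
    (l - 1) * ynum (n + 1) l = -ynum n l + (-1) ^ (n + 1) / ((n + 2) * l ^ (n + 2)) := by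
  have hl1' : l - 1 ≠ 0 := sub_ne_zero.mpr hl1
  rw [ynum, ynum, sum_range_succ, mul_add, mul_sum,
    sum_congr rfl fun j hj => sub_one_mul_ynum_succ_term n j l hl1 (mem_range.mp hj), sum_neg_distrib,
    show n + 1 + 1 - (n + 1) = 1 by omega]
  push_cast
  field_simp
  ring

lemma pow_mul_ynum_recurrence (k : ℕ) (l : ℝ) (hl0 : l ≠ 0) (hl1 : l ≠ 1) :
    l * (l ^ (k + 1) * ynum k l) + (l - 1) * (l ^ (k + 1 + 1) * ynum (k + 1) l) =
      (-1) ^ (k + 1) / ((k : ℝ) + 2) := by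
  calc _ = l ^ (k + 2) * ((l - 1) * ynum (k + 1) l + ynum k l) := by ring
    _ = _ := by
      rw [sub_one_mul_ynum_succ k l hl1]
      field_simp
      ring

lemma sub_one_mul_pow_mul_ynum_zero (l : ℝ) (hl0 : l ≠ 0) (hl1 : l ≠ 1) :
    (l - 1) * (l ^ (0 + 1) * ynum 0 l) = 1 := by
  have hl1' : l - 1 ≠ 0 := sub_ne_zero.mpr hl1
  simp only [ynum, zero_add, pow_one, range_one, sum_singleton, pow_zero, tsub_zero,
    CharP.cast_eq_zero, one_div, mul_inv_rev, inv_one, mul_one]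
  field_simp

lemma sum_div_add_mul_sum_div_of_recurrence (a b : ℝ) (u : ℕ → ℝ)
    (hrec : ∀ k, a * u k + b * u (k + 1) = (-1) ^ (k + 1) / ((k : ℝ) + 2)) (h0 : b * u 0 = 1)
    (m : ℕ) :
    ∑ k ∈ range m, a * u k / ((m - k : ℕ) : ℝ) + b * ∑ k ∈ range (m + 1), u k / ((m + 1 - k : ℕ) : ℝ) =
      ∑ k ∈ range (m + 1), (-1) ^ k / (((k : ℝ) + 1) * ((m + 1 - k : ℕ) : ℝ)) := by
  rw [sum_range_succ', sum_range_succ' (fun k => (-1 : ℝ) ^ k / ((k + 1) * ((m + 1 - k : ℕ) : ℝ))),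
    mul_add, mul_sum, ← add_assoc, ← sum_add_distrib]
  congr 1
  · refine sum_congr rfl fun k _ => ?_
    rw [Nat.add_sub_add_right, mul_div_assoc', ← add_div, hrec, div_div]
    push_cast
    ring
  · simp [mul_div_assoc', h0]

lemma sum_range_neg_one_pow_div_mul_reflect (m : ℕ) :
    ∑ k ∈ range (m + 1), (-1 : ℝ) ^ k / (((k : ℝ) + 1) * ((m + 1 - k : ℕ) : ℝ)) =
      (1 + (-1) ^ m) / ((m : ℝ) + 2) * ∑ k ∈ range (m + 1), (-1 : ℝ) ^ k / ((k : ℝ) + 1) := by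
  have hm : (m : ℝ) + 2 ≠ 0 := by positivity
  have hsplit : ∀ k ∈ range (m + 1), (-1 : ℝ) ^ k / (((k : ℝ) + 1) * ((m + 1 - k : ℕ) : ℝ)) =
      1 / ((m : ℝ) + 2) * ((-1) ^ k / ((k : ℝ) + 1) + (-1) ^ k / ((m + 1 - k : ℕ) : ℝ)) := by
    intro k hk
    have hk := mem_range.mp hk
    have hD : ((m + 1 - k : ℕ) : ℝ) ≠ 0 := by exact_mod_cast (by omega : m + 1 - k ≠ 0)
    have hsum : ((m + 1 - k : ℕ) : ℝ) + (k + 1) = m + 2 := by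
      rw [Nat.cast_sub hk.le]; push_cast; ring
    field_simp
    rw [← hsum]
  have hreflect : ∑ k ∈ range (m + 1), (-1 : ℝ) ^ k / ((m + 1 - k : ℕ) : ℝ) =
      (-1) ^ m * ∑ k ∈ range (m + 1), (-1 : ℝ) ^ k / ((k : ℝ) + 1) := by
    rw [mul_sum, ← sum_range_reflect]
    refine sum_congr rfl fun k hk => ?_
    have hk : k ≤ m := Nat.lt_succ_iff.mp (mem_range.mp hk)
    have hsign : (-1 : ℝ) ^ m = (-1) ^ (m - k) * (-1) ^ k := by rw [← pow_add, Nat.sub_add_cancel hk]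
    have hsq : (-1 : ℝ) ^ k * (-1) ^ k = 1 := by
      rw [← pow_add, ← two_mul, pow_mul]; norm_num
    rw [Nat.add_sub_cancel, show m + 1 - (m - k) = k + 1 by omega, hsign]
    push_cast
    linear_combination (-(-1 : ℝ) ^ (m - k) / ((k : ℝ) + 1)) * hsq
  rw [sum_congr rfl hsplit, ← mul_sum, sum_add_distrib, hreflect]
  ring

theorem stmt_5_general (n : ℕ) (l : ℝ) (hl0 : l ≠ 0) (hl1 : l ≠ 1) :
    harm (2 * n + 2) - harm (n + 1) =
      -1 / (2 * ((n : ℝ) + 1)) +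
      ((n : ℝ) + 1) * ∑ k ∈ Finset.range (2 * n),
        l ^ (k + 2) * ynum k l / ((2 * n - k : ℕ) : ℝ) +
      ((n : ℝ) + 1) * (l - 1) * ∑ k ∈ Finset.range (2 * n + 1),
        l ^ (k + 1) * ynum k l / ((2 * n + 1 - k : ℕ) : ℝ) := by
  have hsum := sum_div_add_mul_sum_div_of_recurrence l (l - 1) (fun k => l ^ (k + 1) * ynum k l)
    (pow_mul_ynum_recurrence · l hl0 hl1) (sub_one_mul_pow_mul_ynum_zero l hl0 hl1) (2 * n)
  rw [sum_range_neg_one_pow_div_mul_reflect, pow_mul, neg_one_sq, one_pow] at hsum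
  have hharm := sum_range_neg_one_pow_div_eq_harm_sub (n + 1)
  rw [show 2 * (n + 1) = 2 * n + 1 + 1 from rfl, sum_range_succ, pow_succ, pow_mul, neg_one_sq,
    one_pow] at hharm
  have hS : ∑ k ∈ range (2 * n), l ^ (k + 2) * ynum k l / ((2 * n - k : ℕ) : ℝ) =
      ∑ k ∈ range (2 * n), l * (l ^ (k + 1) * ynum k l) / ((2 * n - k : ℕ) : ℝ) :=
    sum_congr rfl fun k _ => by ring
  rw [hS, add_assoc, mul_assoc, ← mul_add, hsum, show 2 * n + 2 = 2 * n + 1 + 1 from rfl, ← hharm]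
  push_cast
  field_simp
  ring

theorem stmt_5 (n : ℕ) (hn : 1 ≤ n) (l : ℝ) (hl0 : l ≠ 0) (hl1 : l ≠ 1) :
    harm (2 * n + 2) - harm (n + 1) =
      -1 / (2 * ((n : ℝ) + 1)) +
      ((n : ℝ) + 1) * ∑ k ∈ Finset.range (2 * n),
        l ^ (k + 2) * ynum k l / ((2 * n - k : ℕ) : ℝ) +
      ((n : ℝ) + 1) * (l - 1) * ∑ k ∈ Finset.range (2 * n + 1),
        l ^ (k + 1) * ynum k l / ((2 * n + 1 - k : ℕ) : ℝ) :=
  stmt_5_general n l hl0 hl1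
end

section
/- Let n ≥ 1 be an integer and let λ be a real number with λ ≠ 0 and λ ≠ 1. Then Σ_{k=0}^{2n-2} (1-λ)^{2n+1} · y(k,λ) / ((2n-k-1)·λ^{2n-k-1}) - Σ_{k=0}^{2n-1} (1-λ)^{2n+2} · y(k,λ) / ((2n-k)·λ^{2n-k}) = 0. -/
open Finset

theorem sum_range_neg_one_pow_mul_mul_reflect_eq_zero {R : Type*} [CommRing R] (a : ℕ → R)
    {N : ℕ} (hN : Odd N) : ∑ k ∈ range (N + 1), (-1) ^ k * a k * a (N - k) = 0 := by
  refine sum_involution (fun k _ => N - k) (fun k hk => ?_) (fun k _ _ => ?_)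
    (fun k _ => mem_range.mpr (by omega)) (fun k hk => by have := mem_range.mp hk; omega)
  · have hk : k ≤ N := Nat.lt_succ_iff.mp (mem_range.mp hk)
    have hprod : (-1 : R) ^ (N - k) * (-1) ^ k = -1 := by
      rw [← pow_add, Nat.sub_add_cancel hk, hN.neg_one_pow]
    have hsq : (-1 : R) ^ k * (-1) ^ k = 1 := by
      rw [← pow_add, Even.neg_one_pow ⟨k, rfl⟩]
    rw [Nat.sub_sub_self hk]
    linear_combination a k * a (N - k) * ((-1) ^ k * hprod - (-1) ^ (N - k) * hsq)
  · obtain ⟨j, rfl⟩ := hN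
    omega

theorem mul_sum_conv_add_sum_conv {R : Type*} [CommRing R] {c : R} {y b : ℕ → R}
    (h0 : c * y 0 = b 0) (hsucc : ∀ k, c * y (k + 1) + y k = b (k + 1)) (a : ℕ → R) (N : ℕ) :
    c * ∑ k ∈ range (N + 1), y k * a (N - k) + ∑ k ∈ range N, y k * a (N - 1 - k) =
      ∑ k ∈ range (N + 1), b k * a (N - k) := by
  have hstep : ∀ k ∈ range N, c * (y (k + 1) * a (N - (k + 1))) + y k * a (N - 1 - k) =
      b (k + 1) * a (N - (k + 1)) := fun k _ => by
    rw [← hsucc, Nat.sub_sub, add_comm 1 k]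
    ring
  rw [mul_sum, sum_range_succ', sum_range_succ' (fun k => b k * a (N - k)), ← h0,
    ← sum_congr rfl hstep, sum_add_distrib]
  ring

noncomputable def invTerm (j : ℕ) (l : ℝ) : ℝ := ((j + 1) * l ^ (j + 1))⁻¹

theorem ynum_eq_sum_invTerm (n : ℕ) (l : ℝ) :
    ynum n l = ∑ j ∈ range (n + 1), (-1) ^ n * invTerm j l * ((l - 1) ^ (n + 1 - j))⁻¹ := by
  simp only [ynum, invTerm, div_eq_mul_inv, mul_inv, mul_assoc]

theorem sub_one_mul_ynum_zero {l : ℝ} (hl : l ≠ 1) : (l - 1) * ynum 0 l = invTerm 0 l := by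
  have : l - 1 ≠ 0 := sub_ne_zero.mpr hl
  rw [ynum_eq_sum_invTerm, sum_range_one, pow_zero, one_mul, Nat.sub_zero, pow_one]
  field_simp

theorem sub_one_mul_ynum_succ_add_ynum {l : ℝ} (hl : l ≠ 1) (k : ℕ) :
    (l - 1) * ynum (k + 1) l + ynum k l = (-1) ^ (k + 1) * invTerm (k + 1) l := by
  have h : l - 1 ≠ 0 := sub_ne_zero.mpr hl
  have hterm : ∀ j ∈ range (k + 1),
      (l - 1) * ((-1) ^ (k + 1) * invTerm j l * ((l - 1) ^ (k + 1 + 1 - j))⁻¹) =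
        -((-1) ^ k * invTerm j l * ((l - 1) ^ (k + 1 - j))⁻¹) := fun j hj => by
    rw [show k + 1 + 1 - j = k + 1 - j + 1 by have := mem_range.mp hj; omega]
    field_simp
    ring
  rw [ynum_eq_sum_invTerm, ynum_eq_sum_invTerm, sum_range_succ, mul_add, mul_sum,
    sum_congr rfl hterm, sum_neg_distrib, Nat.add_sub_cancel_left, pow_one]
  field_simp
  ring

theorem sub_one_mul_sum_conv_add_sum_conv_eq_zero {l : ℝ} (hl : l ≠ 1) {N : ℕ} (hN : Odd N) :
    (l - 1) * ∑ k ∈ range (N + 1), ynum k l * invTerm (N - k) l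
      + ∑ k ∈ range N, ynum k l * invTerm (N - 1 - k) l = 0 :=
  (mul_sum_conv_add_sum_conv (b := fun k => (-1) ^ k * invTerm k l)
    (by simpa using sub_one_mul_ynum_zero hl) (sub_one_mul_ynum_succ_add_ynum hl)
    (fun k => invTerm k l) N).trans
    (sum_range_neg_one_pow_mul_mul_reflect_eq_zero (fun k => invTerm k l) hN)

theorem sum_mul_ynum_div_eq_mul_sum_conv (c l : ℝ) (N : ℕ) :
    ∑ k ∈ range N, c * ynum k l / (((N - k : ℕ) : ℝ) * l ^ (N - k)) =
      c * ∑ k ∈ range N, ynum k l * invTerm (N - 1 - k) l := by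
  rw [mul_sum]
  refine sum_congr rfl fun k hk => ?_
  rw [show N - k = N - 1 - k + 1 by have := mem_range.mp hk; omega, invTerm]
  push_cast
  ring

theorem stmt_6_general (n : ℕ) (hn : 1 ≤ n) (l : ℝ) (hl1 : l ≠ 1) :
    ∑ k ∈ Finset.range (2 * n - 1),
        (1 - l) ^ (2 * n + 1) * ynum k l / (((2 * n - k - 1 : ℕ) : ℝ) * l ^ (2 * n - k - 1))
      - ∑ k ∈ Finset.range (2 * n),
        (1 - l) ^ (2 * n + 2) * ynum k l / (((2 * n - k : ℕ) : ℝ) * l ^ (2 * n - k)) = 0 := by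
  have hkey := sub_one_mul_sum_conv_add_sum_conv_eq_zero hl1 (N := 2 * n - 1) ⟨n - 1, by omega⟩
  rw [Nat.sub_add_cancel (by omega : 1 ≤ 2 * n)] at hkey
  simp only [Nat.sub_right_comm _ _ 1, sum_mul_ynum_div_eq_mul_sum_conv]
  linear_combination (1 - l) ^ (2 * n + 1) * hkey

theorem stmt_6 (n : ℕ) (hn : 1 ≤ n) (l : ℝ) (hl0 : l ≠ 0) (hl1 : l ≠ 1) :
    ∑ k ∈ Finset.range (2 * n - 1),
        (1 - l) ^ (2 * n + 1) * ynum k l / (((2 * n - k - 1 : ℕ) : ℝ) * l ^ (2 * n - k - 1))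
      - ∑ k ∈ Finset.range (2 * n),
        (1 - l) ^ (2 * n + 2) * ynum k l / (((2 * n - k : ℕ) : ℝ) * l ^ (2 * n - k)) = 0 :=
  stmt_6_general n hn l hl1
end

section
/- For every nonnegative integer n, Σ_{j=0}^{n} y(j,1/2) · b_{n-j}(0) / (2^j · (n-j)!) = -4. -/
/-- The Bernoulli numbers of the second kind (Cauchy numbers)
`b_n(0) = ∑_{k=0}^{n} S₁(n,k)/(k+1)`. -/
noncomputable def cauchyNum (n : ℕ) : ℝ :=
  ∑ k ∈ Finset.range (n + 1), (S1 n k : ℝ) / ((k : ℝ) + 1)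

/-!
Write `a_j = (-1)^j / (j+1)` for the coefficients of `log (1+t) / t` and `B_k = b_k(0) / k!` for
those of `t / log (1+t)`. Since `y(j, 1/2) = -2^(j+2) (a_0 + ⋯ + a_j)`, the sum is `-4` times the
coefficient of `t^n` in `(log (1+t) / t) · (1-t)⁻¹ · (t / log (1+t)) = (1-t)⁻¹`.

The product of the two series is shown to be `1` without logarithms: `B_k = ∫₀¹ binom(x, k) dx`
because `k! binom(x, k) = ∑ S₁(k, l) x^l`, and `d/dx binom(x, m+1) = ∑_{i+k=m} a_i binom(x, k)`,
so `∑_{i+k=m} a_i B_k = binom(1, m+1) - binom(0, m+1)`, which is `1` for `m = 0` and `0` otherwise.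
-/

open Polynomial Finset Nat

lemma S1_eq_zero_of_lt {n k : ℕ} (h : n < k) : S1 n k = 0 := by
  induction n generalizing k with
  | zero => obtain ⟨k, rfl⟩ := Nat.exists_eq_add_of_lt h; rfl
  | succ n ih =>
    obtain ⟨k, rfl⟩ := Nat.exists_eq_add_of_lt (Nat.zero_lt_of_lt h)
    simp only [zero_add] at h ⊢
    rw [S1, ih (by omega), ih (by omega), mul_zero, sub_zero]

theorem sum_S1_mul_X_pow {R : Type*} [CommRing R] (n : ℕ) :
    ∑ k ∈ range (n + 1), C (S1 n k : R) * X ^ k = descPochhammer R n := by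
  induction n with
  | zero => simp [S1]
  | succ n ih =>
    set f : ℕ → R[X] := fun k ↦ C (S1 n k : R) * X ^ k
    have hrec : ∀ k,
        C (S1 (n + 1) (k + 1) : R) * X ^ (k + 1) = X * f k - C (n : R) * f (k + 1) := by
      intro k
      simp only [f, S1, Int.cast_sub, Int.cast_mul, Int.cast_natCast, map_sub, map_mul]
      ring
    have hzero : C (S1 (n + 1) 0 : R) * X ^ 0 = -(C (n : R) * f 0) := by
      simp only [f, S1, Int.cast_mul, Int.cast_neg, Int.cast_natCast, map_mul, map_neg]
      ring
    have hshift : ∑ k ∈ range (n + 1), f (k + 1) + f 0 = ∑ k ∈ range (n + 1), f k := by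
      rw [← sum_range_succ', sum_range_succ]
      simp [f, S1_eq_zero_of_lt n.lt_succ_self]
    rw [sum_range_succ', hzero, descPochhammer_succ_right, ← ih, ← C_eq_natCast]
    simp only [hrec, sum_sub_distrib, ← mul_sum]
    rw [← hshift]
    ring

noncomputable def binomPoly (K : Type*) [Field K] (m : ℕ) : K[X] :=
  C ((m ! : K)⁻¹) * descPochhammer K m

section BinomPoly

variable {K : Type*} [Field K]

lemma C_add_one_mul_binomPoly_succ [CharZero K] (m : ℕ) :
    C ((m : K) + 1) * binomPoly K (m + 1) = (X - C (m : K)) * binomPoly K m := by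
  have hm1 : (m : K) + 1 ≠ 0 := by exact_mod_cast m.succ_ne_zero
  simp only [binomPoly, descPochhammer_succ_right, factorial_succ, cast_mul, cast_succ,
    ← C_eq_natCast]
  rw [← mul_assoc, ← C_mul, mul_inv, mul_inv_cancel_left₀ hm1]
  ring

lemma binomPoly_succ_eval_zero (m : ℕ) : (binomPoly K (m + 1)).eval 0 = 0 := by
  simp [binomPoly]

lemma binomPoly_succ_eval_one (m : ℕ) : (binomPoly K (m + 1)).eval 1 = if m = 0 then 1 else 0 := by
  rcases m with _ | m
  · simp [binomPoly]
  · have h := descPochhammer_eval_coe_nat_of_lt (R := K) (k := 1) (n := m + 2) (by omega)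
    simp only [cast_one] at h
    simp [binomPoly, h]

end BinomPoly

noncomputable def logSeriesCoeff (K : Type*) [Field K] (j : ℕ) : K := (-1) ^ j / (j + 1)

section LogSeries

variable {K : Type*} [Field K]

lemma logSeriesCoeff_zero : logSeriesCoeff K 0 = 1 := by simp [logSeriesCoeff]

lemma add_two_mul_logSeriesCoeff_succ [CharZero K] (j : ℕ) :
    ((j : K) + 2) * logSeriesCoeff K (j + 1) = -(((j : K) + 1) * logSeriesCoeff K j) := by
  have h1 : (j : K) + 1 ≠ 0 := by exact_mod_cast j.succ_ne_zero
  have h2 : ((j + 1 : ℕ) : K) + 1 ≠ 0 := by exact_mod_cast (j + 1).succ_ne_zero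
  have e : (j : K) + 2 = ((j + 1 : ℕ) : K) + 1 := by push_cast; ring
  rw [e, logSeriesCoeff, logSeriesCoeff, mul_div_assoc', mul_div_assoc',
    mul_div_cancel_left₀ _ h2, mul_div_cancel_left₀ _ h1, pow_succ]
  ring

lemma C_add_two_mul_sum_logSeriesCoeff_binomPoly [CharZero K] (m : ℕ) :
    C ((m : K) + 2) * ∑ p ∈ antidiagonal (m + 1), C (logSeriesCoeff K p.1) * binomPoly K p.2 =
      binomPoly K (m + 1) +
        (X - C ((m : K) + 1)) * ∑ p ∈ antidiagonal m, C (logSeriesCoeff K p.1) * binomPoly K p.2 := by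
  -- split `m + 2 = (p.1 + 1) + p.2` and shift each part along the antidiagonal
  have hsplit : ∀ p ∈ antidiagonal (m + 1),
      C ((m : K) + 2) * (C (logSeriesCoeff K p.1) * binomPoly K p.2) =
        C (((p.1 : K) + 1) * logSeriesCoeff K p.1) * binomPoly K p.2 +
          C (logSeriesCoeff K p.1) * (C (p.2 : K) * binomPoly K p.2) := by
    intro p hp
    have hp' : (p.1 : K) + p.2 = m + 1 := by
      exact_mod_cast HasAntidiagonal.mem_antidiagonal.mp hp
    have hm : (m : K) + 2 = (p.1 + 1) + p.2 := by linear_combination -hp'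
    rw [hm, C_add, C_mul]
    ring
  have hfirst : ∑ p ∈ antidiagonal (m + 1),
      C (((p.1 : K) + 1) * logSeriesCoeff K p.1) * binomPoly K p.2 =
        binomPoly K (m + 1) -
          ∑ p ∈ antidiagonal m, C (((p.1 : K) + 1) * logSeriesCoeff K p.1) * binomPoly K p.2 := by
    have hshift : ∀ p : ℕ × ℕ,
        C ((((p.1 + 1 : ℕ) : K) + 1) * logSeriesCoeff K (p.1 + 1)) * binomPoly K p.2 =
          -(C (((p.1 : K) + 1) * logSeriesCoeff K p.1) * binomPoly K p.2) := by
      intro p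
      rw [cast_succ, add_assoc, one_add_one_eq_two, add_two_mul_logSeriesCoeff_succ, C_neg,
        neg_mul]
    rw [Nat.sum_antidiagonal_succ]
    simp only [hshift, sum_neg_distrib, cast_zero, zero_add, one_mul, logSeriesCoeff_zero, C_1]
    ring
  have hsecond : ∑ p ∈ antidiagonal (m + 1),
      C (logSeriesCoeff K p.1) * (C (p.2 : K) * binomPoly K p.2) =
        ∑ p ∈ antidiagonal m, C (logSeriesCoeff K p.1) * ((X - C (p.2 : K)) * binomPoly K p.2) := by
    rw [Nat.sum_antidiagonal_succ']
    simp only [cast_zero, map_zero, zero_mul, mul_zero, zero_add, cast_succ,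
      C_add_one_mul_binomPoly_succ]
  have hcombine : ∀ p ∈ antidiagonal m,
      C (logSeriesCoeff K p.1) * ((X - C (p.2 : K)) * binomPoly K p.2) -
          C (((p.1 : K) + 1) * logSeriesCoeff K p.1) * binomPoly K p.2 =
        (X - C ((m : K) + 1)) * (C (logSeriesCoeff K p.1) * binomPoly K p.2) := by
    intro p hp
    have hp' : (p.1 : K) + p.2 = m := by exact_mod_cast HasAntidiagonal.mem_antidiagonal.mp hp
    have hm : (m : K) + 1 = (p.1 + 1) + p.2 := by linear_combination -hp'
    rw [hm, C_add, C_mul]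
    ring
  rw [mul_sum, sum_congr rfl hsplit, sum_add_distrib, hfirst, hsecond, mul_sum,
    ← sum_congr rfl hcombine, sum_sub_distrib]
  ring

theorem derivative_binomPoly_succ [CharZero K] (m : ℕ) :
    derivative (binomPoly K (m + 1)) =
      ∑ p ∈ antidiagonal m, C (logSeriesCoeff K p.1) * binomPoly K p.2 := by
  induction m with
  | zero => simp [binomPoly, logSeriesCoeff_zero]
  | succ m ih =>
    have hm : C ((m : K) + 2) ≠ 0 := C_ne_zero.mpr (by exact_mod_cast (m + 1).succ_ne_zero)
    refine mul_left_cancel₀ hm ?_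
    have hrec := congrArg derivative (C_add_one_mul_binomPoly_succ (K := K) (m + 1))
    simp only [derivative_mul, derivative_sub, derivative_X, derivative_C, sub_zero, one_mul,
      zero_mul, zero_add, cast_succ, add_assoc, one_add_one_eq_two] at hrec
    rw [show m + 1 + 1 = m + 2 from rfl, hrec, ih, C_add_two_mul_sum_logSeriesCoeff_binomPoly]

end LogSeries

lemma intervalIntegral_eval_finsetSum {ι : Type*} (s : Finset ι) (f : ι → ℝ[X]) (a b : ℝ) :
    ∫ x in a..b, (∑ i ∈ s, f i).eval x = ∑ i ∈ s, ∫ x in a..b, (f i).eval x := by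
  simp only [eval_finsetSum]
  exact intervalIntegral.integral_finsetSum fun i _ ↦ (f i).continuous.intervalIntegrable _ _

lemma integral_descPochhammer_eval (n : ℕ) :
    ∫ x in (0 : ℝ)..1, (descPochhammer ℝ n).eval x = cauchyNum n := by
  rw [← sum_S1_mul_X_pow, intervalIntegral_eval_finsetSum, cauchyNum]
  refine sum_congr rfl fun k _ ↦ ?_
  simp only [eval_mul, eval_C, eval_pow, eval_X, intervalIntegral.integral_const_mul,
    integral_pow]
  field_simp
  simp

lemma integral_binomPoly_eval (n : ℕ) :
    ∫ x in (0 : ℝ)..1, (binomPoly ℝ n).eval x = cauchyNum n / n ! := by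
  simp only [binomPoly, eval_mul, eval_C]
  rw [intervalIntegral.integral_const_mul, integral_descPochhammer_eval, inv_mul_eq_div]

theorem sum_antidiagonal_logSeriesCoeff_mul_cauchyNum (m : ℕ) :
    ∑ p ∈ antidiagonal m, logSeriesCoeff ℝ p.1 * (cauchyNum p.2 / p.2 !) =
      if m = 0 then 1 else 0 := by
  have hftc : ∫ x in (0 : ℝ)..1, (derivative (binomPoly ℝ (m + 1))).eval x =
      (binomPoly ℝ (m + 1)).eval 1 - (binomPoly ℝ (m + 1)).eval 0 :=
    intervalIntegral.integral_eq_sub_of_hasDerivAt (fun x _ ↦ (binomPoly ℝ (m + 1)).hasDerivAt x)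
      ((derivative _).continuous.intervalIntegrable _ _)
  rw [binomPoly_succ_eval_one, binomPoly_succ_eval_zero, sub_zero, derivative_binomPoly_succ,
    intervalIntegral_eval_finsetSum] at hftc
  rw [← hftc]
  refine sum_congr rfl fun p _ ↦ ?_
  simp only [eval_mul, eval_C, intervalIntegral.integral_const_mul, integral_binomPoly_eval]

noncomputable def logSeries : PowerSeries ℝ := PowerSeries.mk (logSeriesCoeff ℝ)

noncomputable def cauchySeries : PowerSeries ℝ := PowerSeries.mk fun n ↦ cauchyNum n / n !

theorem logSeries_mul_cauchySeries : logSeries * cauchySeries = 1 := by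
  ext m
  rw [PowerSeries.coeff_mul, PowerSeries.coeff_one]
  simp only [logSeries, cauchySeries, PowerSeries.coeff_mk]
  exact sum_antidiagonal_logSeriesCoeff_mul_cauchyNum m

theorem sum_partialSum_logSeriesCoeff_mul_cauchyNum (n : ℕ) :
    ∑ j ∈ range (n + 1), (∑ i ∈ range (j + 1), logSeriesCoeff ℝ i) *
      (cauchyNum (n - j) / (n - j)!) = 1 := by
  set G : PowerSeries ℝ := PowerSeries.mk 1
  have hpartial : ∀ j,
      PowerSeries.coeff j (logSeries * G) = ∑ i ∈ range (j + 1), logSeriesCoeff ℝ i := by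
    intro j
    rw [PowerSeries.coeff_mul, Nat.sum_antidiagonal_eq_sum_range_succ
      (fun i k ↦ PowerSeries.coeff i logSeries * PowerSeries.coeff k G)]
    simp [logSeries, G]
  calc _ = PowerSeries.coeff n (logSeries * G * cauchySeries) := by
        rw [PowerSeries.coeff_mul, Nat.sum_antidiagonal_eq_sum_range_succ
          (fun j k ↦ PowerSeries.coeff j (logSeries * G) * PowerSeries.coeff k cauchySeries)]
        simp [hpartial, cauchySeries]
    _ = PowerSeries.coeff n G := by rw [mul_right_comm, logSeries_mul_cauchySeries, one_mul]
    _ = 1 := by simp [G]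

lemma ynum_one_half (j : ℕ) :
    ynum j (1 / 2) = -2 ^ (j + 2) * ∑ i ∈ range (j + 1), logSeriesCoeff ℝ i := by
  rw [ynum, mul_sum]
  refine sum_congr rfl fun i hi ↦ ?_
  obtain ⟨d, rfl⟩ := Nat.exists_eq_add_of_le (mem_range_succ_iff.mp hi)
  rw [show i + d + 1 - i = d + 1 by omega, logSeriesCoeff,
    show (1 / 2 : ℝ) - 1 = -1 / 2 by norm_num, div_pow, div_pow, one_pow]
  field_simp
  ring

theorem stmt_8 (n : ℕ) :
    ∑ j ∈ Finset.range (n + 1),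
      ynum j (1 / 2) * cauchyNum (n - j) / (2 ^ j * ((n - j).factorial : ℝ)) = -4 := by
  have hterm : ∀ j ∈ range (n + 1),
      ynum j (1 / 2) * cauchyNum (n - j) / (2 ^ j * ((n - j).factorial : ℝ)) =
        -4 * ((∑ i ∈ range (j + 1), logSeriesCoeff ℝ i) * (cauchyNum (n - j) / (n - j)!)) := by
    intro j _
    rw [ynum_one_half]
    field_simp
    ring
  rw [sum_congr rfl hterm, ← mul_sum, sum_partialSum_logSeriesCoeff_mul_cauchyNum, mul_one]
end

section
/- For every nonnegative integer n, y(n,1/2) = (2^{n+2}/n!) · (n!·𝓗_n - D_n). -/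
/-- The alternating harmonic numbers `𝓗_n = ∑_{j=1}^{n} (-1)^j/j` (with `𝓗_0 = 0`). -/
noncomputable def altHarm (n : ℕ) : ℝ :=
  ∑ j ∈ Finset.range n, (-1 : ℝ) ^ (j + 1) / ((j : ℝ) + 1)

/-- The Daehee numbers `D_n = (-1)^n · n!/(n+1)`. -/
noncomputable def daehee (n : ℕ) : ℝ := (-1 : ℝ) ^ n * (n.factorial : ℝ) / ((n : ℝ) + 1)

/-! At `λ = 1/2` the `j`-th summand of `y(n,λ)` is `2^{n+2} (-1)^{j+1}/(j+1)`, so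
`y(n,1/2) = 2^{n+2} 𝓗_{n+1}`; and `-D_n/n! = (-1)^{n+1}/(n+1)` is exactly the last term of `𝓗_{n+1}`. -/

lemma altHarm_succ (n : ℕ) : altHarm (n + 1) = altHarm n + (-1) ^ (n + 1) / ((n : ℝ) + 1) :=
  Finset.sum_range_succ _ _

lemma daehee_div_factorial (n : ℕ) : daehee n / n.factorial = (-1) ^ n / ((n : ℝ) + 1) := by
  rw [daehee]
  field_simp

lemma ynum_one_half_term {j n : ℕ} (hj : j ≤ n) :
    (-1 : ℝ) ^ n / ((j + 1) * (1 / 2) ^ (j + 1) * (1 / 2 - 1) ^ (n + 1 - j)) =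
      2 ^ (n + 2) * ((-1) ^ (j + 1) / ((j : ℝ) + 1)) := by
  obtain ⟨m, rfl⟩ := Nat.exists_eq_add_of_le hj
  rw [show j + m + 1 - j = m + 1 by omega, show (1 / 2 - 1 : ℝ) = -1 / 2 by norm_num,
    div_pow, div_pow, one_pow]
  field_simp
  ring

lemma ynum_one_half_s9 (n : ℕ) : ynum n (1 / 2) = 2 ^ (n + 2) * altHarm (n + 1) := by
  rw [ynum, altHarm, Finset.mul_sum]
  exact Finset.sum_congr rfl fun j hj => ynum_one_half_term (Finset.mem_range_succ_iff.mp hj)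

theorem stmt_9 (n : ℕ) :
    ynum n (1 / 2) =
      (2 ^ (n + 2) / (n.factorial : ℝ)) * ((n.factorial : ℝ) * altHarm n - daehee n) := by
  have hfac : (n.factorial : ℝ) ≠ 0 := by positivity
  rw [ynum_one_half_s9, altHarm_succ, div_mul_eq_mul_div, mul_div_assoc, sub_div,
    mul_div_cancel_left₀ _ hfac, daehee_div_factorial, pow_succ]
  ring
end

section
/- Let m be a nonnegative integer and let λ be a real number with λ ≠ 0 and λ ≠ 1. Then 𝓑_m(λ) = Σ_{n=0}^{m} (n+1)! · λ^{n+1} · y(n,λ) · S₂(m,n+1). -/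
/-- The Stirling numbers of the second kind,
`S₂(n,k) = (1/k!)·∑_{c=0}^{k} (-1)^{k-c}·C(k,c)·c^n`. -/
def S2 (n k : ℕ) : ℚ :=
  (1 / (k.factorial : ℚ)) *
    ∑ c ∈ Finset.range (k + 1), (-1 : ℚ) ^ (k - c) * (k.choose c : ℚ) * (c : ℚ) ^ n

/-- The Apostol–Bernoulli numbers `𝓑_n(λ)`: `𝓑_0(λ) = 0` and for `n ≥ 1`,
`𝓑_n(λ) = (n·λ/(λ-1)^n)·∑_{c=0}^{n-1} (-1)^c·c!·λ^{c-1}·(λ-1)^{n-1-c}·S₂(n-1,c)`. -/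
noncomputable def apostolBernoulli (n : ℕ) (l : ℝ) : ℝ :=
  if n = 0 then 0
  else ((n : ℝ) * l / (l - 1) ^ n) *
    ∑ c ∈ Finset.range n, (-1 : ℝ) ^ c * (c.factorial : ℝ) * l ^ ((c : ℤ) - 1) *
      (l - 1) ^ (n - 1 - c) * (S2 (n - 1) c : ℝ)

/-! Put `q_k = λ^k / (λ-1)^(k+1)`. Expanding the definition, `𝓑_m(λ) = m ∑_k (-1)^k k! S₂(m-1,k) q_k`,
while `λ^(n+1) y(n,λ) = (-1)^n ∑_{k ≤ n} q_k / (n-k+1)`, so after exchanging the double sum the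
right-hand side is `∑_k (-1)^k q_k ∑_i (-1)^i (k+i+1)! S₂(m,k+i+1) / (i+1)`. The inner sum equals
`m k! S₂(m-1,k)`: this is `D = log (1 + Δ)` applied to `x^m` and evaluated at `0`, given that
`Δ^j x^m (0) = j! S₂(m,j)`. It follows by induction on `m` from the recurrence of `S₂`: writing
`(k+i+1)/(i+1) = 1 + k/(i+1)`, the first part telescopes and the second is the induction hypothesis. -/

open Finset Nat
open scoped fwdDiff

theorem fwdDiff_iter_pow_eq_sum (m k y : ℕ) :
    Δ_[1] ^[k] (fun x : ℕ ↦ (x : ℤ) ^ m) y =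
      ∑ c ∈ range (k + 1), (-1 : ℤ) ^ (k - c) * k.choose c * ((y + c : ℕ) : ℤ) ^ m := by
  simp [fwdDiff_iter_eq_sum_shift]

theorem fwdDiff_iter_succ_pow_succ_zero (m k : ℕ) :
    Δ_[1] ^[k + 1] (fun x : ℕ ↦ (x : ℤ) ^ (m + 1)) 0 =
      (k + 1) * Δ_[1] ^[k] (fun x : ℕ ↦ (x : ℤ) ^ m) 1 := by
  rw [fwdDiff_iter_pow_eq_sum, fwdDiff_iter_pow_eq_sum, sum_range_succ', mul_sum]
  simp only [Nat.cast_zero, zero_add, zero_pow (Nat.succ_ne_zero m), mul_zero, add_zero]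
  refine sum_congr rfl fun c _ ↦ ?_
  have h := congrArg (Nat.cast : ℕ → ℤ) (Nat.add_one_mul_choose_eq k c)
  push_cast at h ⊢
  rw [pow_succ]
  linear_combination ((-1 : ℤ) ^ (k - c) * ((c : ℤ) + 1) ^ m) * h.symm

theorem fwdDiff_iter_succ_add_fwdDiff_iter {G : Type*} [AddCommGroup G] (f : ℕ → G) (k y : ℕ) :
    Δ_[1] ^[k + 1] f y + Δ_[1] ^[k] f y = Δ_[1] ^[k] f (y + 1) := by
  rw [Function.iterate_succ_apply, ← Pi.add_apply, ← fwdDiff_iter_add]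
  have : Δ_[1] f + f = fun r ↦ f (r + 1) := by ext; simp [fwdDiff]
  rw [this, fwdDiff_iter_comp_add]

theorem fwdDiff_iter_pow_eq_factorial_mul_stirlingSecond (m k : ℕ) :
    Δ_[1] ^[k] (fun x : ℕ ↦ (x : ℤ) ^ m) 0 = k ! * stirlingSecond m k := by
  induction m generalizing k with
  | zero => cases k <;> simp [fwdDiff_const, Function.iterate_fixed]
  | succ m ih =>
    cases k with
    | zero => simp
    | succ k =>
      rw [fwdDiff_iter_succ_pow_succ_zero, ← zero_add 1, ← fwdDiff_iter_succ_add_fwdDiff_iter,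
        ih, ih, stirlingSecond_succ_succ, factorial_succ]
      push_cast
      ring

theorem S2_eq_stirlingSecond (m k : ℕ) : S2 m k = stirlingSecond m k := by
  have h := congrArg (Int.cast : ℤ → ℚ) (fwdDiff_iter_pow_eq_factorial_mul_stirlingSecond m k)
  rw [fwdDiff_iter_pow_eq_sum] at h
  push_cast [zero_add] at h
  rw [S2, h]
  field_simp

theorem factorial_mul_stirlingSecond_succ_succ {R : Type*} [CommSemiring R] (m k : ℕ) :
    ((k + 1)! * stirlingSecond (m + 1) (k + 1) : R) =
      (k + 1) * ((k + 1)! * stirlingSecond m (k + 1) + k ! * stirlingSecond m k) := by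
  rw [stirlingSecond_succ_succ, factorial_succ]
  push_cast
  ring

theorem sum_alternating_stirlingSecond_div {K : Type*} [Field K] [CharZero K]
    (m k N : ℕ) (hN : m ≤ k + N) :
    ∑ i ∈ range N, (-1 : K) ^ i * ((k + i + 1)! * stirlingSecond m (k + i + 1)) / (i + 1) =
      m * (k ! * stirlingSecond (m - 1) k) := by
  induction m generalizing k with
  | zero => simp [stirlingSecond]
  | succ m ih =>
    set a : ℕ → K := fun j ↦ j ! * stirlingSecond m j with ha
    have hsplit : ∀ i ∈ range N,
        (-1 : K) ^ i * ((k + i + 1)! * stirlingSecond (m + 1) (k + i + 1)) / (i + 1) =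
          ((-1) ^ i * a (k + i) - (-1) ^ (i + 1) * a (k + (i + 1))) +
            k * ((-1) ^ i * a (k + i + 1) / (i + 1) + (-1) ^ i * a (k + i) / (i + 1)) := by
      intro i _
      rw [factorial_mul_stirlingSecond_succ_succ]
      simp only [ha, ← add_assoc]
      field_simp
      push_cast
      ring
    have htel : ∑ i ∈ range N, ((-1 : K) ^ i * a (k + i) - (-1) ^ (i + 1) * a (k + (i + 1))) =
        a k := by
      rw [sum_range_sub' (fun i ↦ (-1 : K) ^ i * a (k + i))]
      simp [ha, stirlingSecond_eq_zero_of_lt (show m < k + N by omega)]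
    have hlow : (k : K) * ∑ i ∈ range N, (-1 : K) ^ i * a (k + i) / (i + 1) =
        k * (m * ((k - 1)! * stirlingSecond (m - 1) (k - 1))) := by
      cases k with
      | zero => simp
      | succ k =>
        rw [Nat.add_sub_cancel, ← ih k (by omega)]
        congr 1
        refine sum_congr rfl fun i _ ↦ ?_
        simp only [ha, add_right_comm k 1 i]
    rw [sum_congr rfl hsplit, sum_add_distrib, htel, ← mul_sum, sum_add_distrib, mul_add, hlow,
      ih k (by omega)]
    have hrec : (m : K) * (k * (k ! * stirlingSecond (m - 1) k +
        (k - 1)! * stirlingSecond (m - 1) (k - 1))) = m * a k := by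
      rcases m with _ | m
      · simp
      rcases k with _ | k
      · simp [ha]
      simp only [ha, factorial_mul_stirlingSecond_succ_succ, add_tsub_cancel_right]
      push_cast
      ring
    simp only [ha] at hrec ⊢
    push_cast
    linear_combination hrec

theorem pow_succ_mul_ynum (n : ℕ) {l : ℝ} (hl0 : l ≠ 0) (hl1 : l ≠ 1) :
    l ^ (n + 1) * ynum n l =
      ∑ j ∈ range (n + 1), (-1) ^ n * (l ^ j / (l - 1) ^ (j + 1)) / ((n - j : ℕ) + 1) := by
  rw [ynum, mul_sum, ← sum_range_reflect]
  refine sum_congr rfl fun j hj ↦ ?_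
  have hjn : j ≤ n := Nat.lt_succ_iff.mp (mem_range.mp hj)
  have hsub : l - 1 ≠ 0 := sub_ne_zero.mpr hl1
  rw [Nat.add_sub_cancel, show n + 1 - (n - j) = j + 1 by omega,
    show l ^ (n + 1) = l ^ (n - j + 1) * l ^ j by rw [← pow_add]; congr 1; omega]
  field_simp

theorem apostolBernoulli_succ (p : ℕ) {l : ℝ} (hl0 : l ≠ 0) (hl1 : l ≠ 1) :
    apostolBernoulli (p + 1) l =
      (p + 1) * ∑ c ∈ range (p + 1),
        (-1) ^ c * (l ^ c / (l - 1) ^ (c + 1)) * (c ! * stirlingSecond p c) := by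
  rw [apostolBernoulli, if_neg p.succ_ne_zero, Nat.add_sub_cancel, mul_sum, mul_sum]
  refine sum_congr rfl fun c hc ↦ ?_
  have hcp : c ≤ p := Nat.lt_succ_iff.mp (mem_range.mp hc)
  have hsub : l - 1 ≠ 0 := sub_ne_zero.mpr hl1
  rw [S2_eq_stirlingSecond, zpow_sub₀ hl0, zpow_natCast, zpow_one,
    show (l - 1) ^ (p + 1) = (l - 1) ^ (p - c) * (l - 1) ^ (c + 1) by rw [← pow_add]; congr 1; omega]
  push_cast
  field_simp

theorem stmt_12 (m : ℕ) (l : ℝ) (hl0 : l ≠ 0) (hl1 : l ≠ 1) :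
    apostolBernoulli m l =
      ∑ n ∈ Finset.range (m + 1),
        ((n + 1).factorial : ℝ) * l ^ (n + 1) * ynum n l * (S2 m (n + 1) : ℝ) := by
  rcases m with _ | p
  · simp [apostolBernoulli, S2_eq_stirlingSecond]
  set g : ℕ → ℕ → ℝ := fun k i ↦ (-1) ^ k * (l ^ k / (l - 1) ^ (k + 1)) *
    ((-1) ^ i * ((k + i + 1)! * stirlingSecond (p + 1) (k + i + 1)) / ((i : ℝ) + 1)) with hg
  have hterm : ∀ n ∈ range (p + 2),
      ((n + 1)! : ℝ) * l ^ (n + 1) * ynum n l * (S2 (p + 1) (n + 1) : ℝ) =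
        ∑ j ∈ range (n + 1), g j (n - j) := by
    intro n _
    rw [mul_assoc _ (l ^ _), pow_succ_mul_ynum n hl0 hl1, mul_sum, sum_mul]
    refine sum_congr rfl fun j hj ↦ ?_
    have hjn : j ≤ n := Nat.lt_succ_iff.mp (mem_range.mp hj)
    simp only [hg]
    rw [Nat.add_sub_cancel' hjn, S2_eq_stirlingSecond,
      show (-1 : ℝ) ^ n = (-1) ^ j * (-1) ^ (n - j) by rw [← pow_add, Nat.add_sub_cancel' hjn]]
    push_cast
    ring
  have hinner : ∀ k ∈ range (p + 2), ∑ i ∈ range (p + 2 - k), g k i =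
      (p + 1) * ((-1) ^ k * (l ^ k / (l - 1) ^ (k + 1)) * (k ! * stirlingSecond p k)) := by
    intro k hk
    simp only [hg]
    rw [← mul_sum, sum_alternating_stirlingSecond_div _ _ _ (by omega), Nat.add_sub_cancel]
    push_cast
    ring
  rw [sum_congr rfl hterm, sum_range_diag_flip, sum_congr rfl hinner, ← mul_sum, sum_range_succ,
    stirlingSecond_eq_zero_of_lt p.lt_succ_self, apostolBernoulli_succ p hl0 hl1]
  simp
end

section
/- For every nonnegative integer m, 𝓑_m(1/2) = Σ_{n=0}^{m} ((n+1)!/2^{n+1}) · y(n,1/2) · S₂(m,n+1). -/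
/-!
Write `Δ` for the forward difference operator, so that `k! S₂(n,k) = (Δᵏ xⁿ)(0)`. At `λ = 1/2`
one has `y(n,1/2) = -2^(n+2) a_(n+1)` with `a_k = ∑_{j<k} (-1)^j/(j+1)`, and the defining sum of
`𝓑_m(1/2)` collapses to `-2m ∑_c (Δᶜ x^(m-1))(0)`. Since `∑_k a_k Δᵏ = (∑_i Δⁱ) ∘ log(1 + Δ)`, the
theorem reduces to Newton's formula `log(1 + Δ) = d/dx` on polynomials. That formula follows by
induction on the degree from the Leibniz rule `Δⁿ⁺¹(x g) = x Δⁿ⁺¹ g + (n+1) (Δⁿ g)(x+1)` and the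
expansion `g(x) = ∑_l (-Δ)ˡ g (x+1)`; every truncated series is exact because `Δᵏ xⁿ = 0` for `k > n`.
-/

open Finset Function fwdDiff

theorem sum_neg_one_pow_smul_fwdDiff_iter_add {M G : Type*} [AddCommMonoid M] [AddCommGroup G]
    (h : M) (f : M → G) (n : ℕ) (y : M) :
    ∑ l ∈ range n, (-1 : ℤ) ^ l • Δ_[h] ^[l] f (y + h) =
      f y - (-1 : ℤ) ^ n • Δ_[h] ^[n] f y := by
  have hstep (l : ℕ) : Δ_[h] ^[l] f (y + h) = Δ_[h] ^[l] f y + Δ_[h] ^[l + 1] f y := by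
    rw [iterate_succ_apply', fwdDiff, add_sub_cancel]
  induction n with
  | zero => simp
  | succ n ih =>
    rw [sum_range_succ, ih, hstep, pow_succ]
    module

theorem sum_range_sum_mul_eq_sum_sum_mul {R : Type*} [NonUnitalNonAssocSemiring R]
    (b d : ℕ → R) {N : ℕ} (hd : ∀ k, N ≤ k → d k = 0) :
    ∑ n ∈ range N, (∑ j ∈ range (n + 1), b j) * d n =
      ∑ i ∈ range N, ∑ j ∈ range N, b j * d (j + i) := by
  have hshift {j : ℕ} (hj : j < N) : ∑ i ∈ range N, d (j + i) = ∑ n ∈ Ico j N, d n := by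
    rw [sum_Ico_eq_sum_range]
    refine (sum_subset (range_subset_range.2 (Nat.sub_le N j)) fun i _ hi ↦ hd _ ?_).symm
    simp only [mem_range, not_lt] at hi
    omega
  calc ∑ n ∈ range N, (∑ j ∈ range (n + 1), b j) * d n
      = ∑ n ∈ range N, ∑ j ∈ range (n + 1), b j * d n := by simp_rw [sum_mul]
    _ = ∑ j ∈ range N, ∑ n ∈ Ico j N, b j * d n :=
        sum_comm' fun n j ↦ by simp only [mem_range, mem_Ico]; omega
    _ = ∑ j ∈ range N, ∑ i ∈ range N, b j * d (j + i) :=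
        sum_congr rfl fun j hj ↦ by rw [← mul_sum, ← mul_sum, hshift (mem_range.1 hj)]
    _ = _ := sum_comm

theorem fwdDiff_iter_succ_mul {R : Type*} [CommRing R] (g : R → R) (n : ℕ) (y : R) :
    Δ_[1] ^[n + 1] (fun x ↦ x * g x) y =
      y * Δ_[1] ^[n + 1] g y + (n + 1) * Δ_[1] ^[n] g (y + 1) := by
  induction n generalizing y with
  | zero =>
    simp only [zero_add, iterate_one, iterate_zero, id, fwdDiff, Nat.cast_zero]
    ring
  | succ n ih =>
    rw [iterate_succ_apply', funext ih, fwdDiff, iterate_succ_apply' (n := n + 1), fwdDiff,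
      iterate_succ_apply' (n := n), fwdDiff, fwdDiff]
    push_cast
    ring

section Newton

variable {K : Type*} [Field K] [CharZero K]

theorem sum_neg_one_pow_div_mul_fwdDiff_iter_pow {p N : ℕ} (hp : p ≤ N + 1) (y : K) :
    ∑ l ∈ range (N + 1), (-1) ^ l / (l + 1) * Δ_[1] ^[l + 1] (fun x ↦ x ^ p) y =
      p * y ^ (p - 1) := by
  induction p generalizing y with
  | zero =>
    rw [sum_eq_zero fun l _ ↦ by
      rw [fwdDiff_iter_pow_eq_zero_of_lt l.succ_pos, Pi.zero_apply, mul_zero]]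
    simp
  | succ p ih =>
    have hterm (l : ℕ) : (-1) ^ l / (l + 1) * Δ_[1] ^[l + 1] (fun x ↦ x ^ (p + 1)) y =
        y * ((-1) ^ l / (l + 1) * Δ_[1] ^[l + 1] (fun x ↦ x ^ p) y) +
          (-1 : ℤ) ^ l • Δ_[1] ^[l] (fun x ↦ x ^ p) (y + 1) := by
      simp_rw [pow_succ' _ p, fwdDiff_iter_succ_mul, zsmul_eq_mul]
      field_simp
      push_cast
      ring
    have hvanish : Δ_[1] ^[N + 1] (fun x : K ↦ x ^ p) = 0 :=
      fwdDiff_iter_pow_eq_zero_of_lt (by omega)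
    simp only [hterm, sum_add_distrib, ← mul_sum, ih (by omega),
      sum_neg_one_pow_smul_fwdDiff_iter_add, hvanish, Pi.zero_apply, smul_zero, sub_zero]
    rcases p with _ | p
    · simp
    · push_cast
      ring

theorem sum_partialSum_mul_fwdDiff_iter_pow (m : ℕ) :
    ∑ n ∈ range (m + 1), (∑ j ∈ range (n + 1), (-1 : K) ^ j / (j + 1)) *
        Δ_[1] ^[n + 1] (fun x : K ↦ x ^ m) 0 =
      m * ∑ i ∈ range m, Δ_[1] ^[i] (fun x : K ↦ x ^ (m - 1)) 0 := by
  have hnewton : ∑ j ∈ range (m + 1),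
      ((-1 : K) ^ j / (j + 1)) • Δ_[1] ^[j + 1] (fun x : K ↦ x ^ m) =
        (m : K) • fun x : K ↦ x ^ (m - 1) := by
    funext y
    simpa using sum_neg_one_pow_div_mul_fwdDiff_iter_pow (N := m) (Nat.le_succ m) y
  rw [sum_range_sum_mul_eq_sum_sum_mul _ (fun n ↦ Δ_[1] ^[n + 1] (fun x : K ↦ x ^ m) 0)
    fun k hk ↦ by rw [fwdDiff_iter_pow_eq_zero_of_lt (by omega), Pi.zero_apply]]
  have hinner (i : ℕ) : ∑ j ∈ range (m + 1), (-1 : K) ^ j / (j + 1) *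
      Δ_[1] ^[j + i + 1] (fun x : K ↦ x ^ m) 0 = m * Δ_[1] ^[i] (fun x : K ↦ x ^ (m - 1)) 0 := by
    simp_rw [show ∀ j, j + i + 1 = i + (j + 1) by omega, iterate_add_apply]
    calc _ = Δ_[1] ^[i] (∑ j ∈ range (m + 1),
          ((-1 : K) ^ j / (j + 1)) • Δ_[1] ^[j + 1] (fun x : K ↦ x ^ m)) 0 := by
          simp [fwdDiff_iter_finsetSum, fwdDiff_iter_const_smul]
      _ = _ := by rw [hnewton, fwdDiff_iter_const_smul]; rfl
  simp_rw [hinner, ← mul_sum, sum_range_succ]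
  rcases m with _ | m
  · simp
  · rw [fwdDiff_iter_pow_eq_zero_of_lt (by omega), Pi.zero_apply, add_zero]

end Newton

theorem factorial_mul_S2 (n k : ℕ) :
    (k.factorial : ℝ) * (S2 n k : ℝ) = Δ_[1] ^[k] (fun x : ℝ ↦ x ^ n) 0 := by
  rw [fwdDiff_iter_eq_sum_shift, S2]
  push_cast
  rw [← mul_assoc, mul_one_div_cancel (by positivity), one_mul]
  simp [zsmul_eq_mul]

theorem ynum_half (n : ℕ) :
    ynum n (1 / 2) = -2 ^ (n + 2) * ∑ j ∈ range (n + 1), (-1 : ℝ) ^ j / (j + 1) := by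
  rw [ynum, mul_sum]
  refine sum_congr rfl fun j hj ↦ ?_
  obtain ⟨d, rfl⟩ : ∃ d, n = j + d := ⟨n - j, by simp at hj; omega⟩
  rw [show j + d + 1 - j = d + 1 by omega, one_div, show (2⁻¹ : ℝ) - 1 = -1 * 2⁻¹ by norm_num]
  simp only [mul_pow, inv_pow]
  field_simp
  ring

theorem apostolBernoulli_half (m : ℕ) :
    apostolBernoulli m (1 / 2) =
      -2 * m * ∑ c ∈ range m, Δ_[1] ^[c] (fun x : ℝ ↦ x ^ (m - 1)) 0 := by
  rcases m with _ | m
  · simp [apostolBernoulli]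
  rw [apostolBernoulli, if_neg m.succ_ne_zero, Nat.add_sub_cancel, mul_sum, mul_sum]
  refine sum_congr rfl fun c hc ↦ ?_
  obtain ⟨d, rfl⟩ : ∃ d, m = c + d := ⟨m - c, by simp at hc; omega⟩
  rw [show c + d - c = d by omega, ← factorial_mul_S2, zpow_sub_one₀ (by norm_num), zpow_natCast,
    one_div, show (2⁻¹ : ℝ) - 1 = -1 * 2⁻¹ by norm_num]
  simp only [mul_pow, inv_pow]
  field_simp
  ring

theorem stmt_13 (m : ℕ) :
    apostolBernoulli m (1 / 2) =
      ∑ n ∈ Finset.range (m + 1),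
        (((n + 1).factorial : ℝ) / 2 ^ (n + 1)) * ynum n (1 / 2) * (S2 m (n + 1) : ℝ) := by
  rw [apostolBernoulli_half, mul_assoc, ← sum_partialSum_mul_fwdDiff_iter_pow, mul_sum]
  refine sum_congr rfl fun n _ ↦ ?_
  rw [ynum_half, ← factorial_mul_S2]
  field_simp
  ring
end

section
/- Let n be a nonnegative integer and let λ be a real number with λ ≠ 0 and λ ≠ 1. Viewing y(n,·) as a differentiable function of λ on ℝ \ {0,1}, one has (λ-1)·(d/dλ)y(n,λ) + (n+2)·y(n,λ) = (-1)^n · Σ_{k=0}^{n} (λ-1)^{k-n-1} / λ^{k+2}. -/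
/-!
With integer exponents, the `j`-th summand of `y(n, t)` is `(-1)^n / (j+1) · t^a (t-1)^b` with
`a = -(j+1)` and `b = j-n-1`. For such a monomial
`(t-1) · d/dt [t^a (t-1)^b] = (a+b) t^a (t-1)^b - a t^(a-1) (t-1)^b`, and `a + b = -(n+2)` for
every summand, so the term `(n+2) y` cancels and the `j`-th summand contributes exactly
`(-1)^n (t-1)^(j-n-1) / t^(j+2)`.
-/

section ZPowMulSubOneZPow

variable {l : ℝ} (a b : ℤ)

theorem hasDerivAt_zpow_mul_sub_one_zpow (hl0 : l ≠ 0) (hl1 : l ≠ 1) :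
    HasDerivAt (fun t : ℝ => t ^ a * (t - 1) ^ b)
      (a * l ^ (a - 1) * (l - 1) ^ b + l ^ a * (b * (l - 1) ^ (b - 1))) l :=
  (hasDerivAt_zpow a l (.inl hl0)).mul
    ((hasDerivAt_zpow b (l - 1) (.inl (sub_ne_zero.mpr hl1))).comp_sub_const l 1)

theorem sub_one_mul_deriv_zpow_mul_sub_one_zpow (hl0 : l ≠ 0) (hl1 : l ≠ 1) :
    (l - 1) * deriv (fun t : ℝ => t ^ a * (t - 1) ^ b) l =
      (a + b) * (l ^ a * (l - 1) ^ b) - a * (l ^ (a - 1) * (l - 1) ^ b) := by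
  have hl1' : l - 1 ≠ 0 := sub_ne_zero.mpr hl1
  rw [(hasDerivAt_zpow_mul_sub_one_zpow a b hl0 hl1).deriv, zpow_sub_one₀ hl0,
    zpow_sub_one₀ hl1']
  field_simp
  ring

end ZPowMulSubOneZPow

theorem ynum_eq_sum_zpow (n : ℕ) :
    ynum n = fun t => ∑ j ∈ Finset.range (n + 1),
      (-1 : ℝ) ^ n / (j + 1) * (t ^ (-((j : ℤ) + 1)) * (t - 1) ^ ((j : ℤ) - n - 1)) := by
  funext t
  refine Finset.sum_congr rfl fun j hj => ?_
  have hjn : (j : ℤ) - n - 1 = -((n + 1 - j : ℕ) : ℤ) := by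
    have := Finset.mem_range_succ_iff.mp hj
    push_cast [this, Nat.le_succ_of_le this]; ring
  rw [hjn, show -((j : ℤ) + 1) = -((j + 1 : ℕ) : ℤ) by push_cast; ring, zpow_neg, zpow_neg,
    zpow_natCast, zpow_natCast, ← mul_inv, ← div_eq_mul_inv, div_div, mul_assoc]

theorem stmt_18 (n : ℕ) (l : ℝ) (hl0 : l ≠ 0) (hl1 : l ≠ 1) :
    (l - 1) * deriv (fun t : ℝ => ynum n t) l + ((n : ℝ) + 2) * ynum n l =
      (-1 : ℝ) ^ n * ∑ k ∈ Finset.range (n + 1),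
        (l - 1) ^ ((k : ℤ) - (n : ℤ) - 1) / l ^ (k + 2) := by
  have hg : ∀ j ∈ Finset.range (n + 1), DifferentiableAt ℝ (fun t : ℝ =>
      (-1 : ℝ) ^ n / (j + 1) * (t ^ (-((j : ℤ) + 1)) * (t - 1) ^ ((j : ℤ) - n - 1))) l := fun j _ =>
    ((hasDerivAt_zpow_mul_sub_one_zpow _ _ hl0 hl1).differentiableAt).const_mul _
  rw [ynum_eq_sum_zpow, deriv_fun_sum hg, Finset.mul_sum, Finset.mul_sum, Finset.mul_sum,
    ← Finset.sum_add_distrib]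
  refine Finset.sum_congr rfl fun j _ => ?_
  rw [deriv_const_mul _ (hasDerivAt_zpow_mul_sub_one_zpow _ _ hl0 hl1).differentiableAt,
    mul_left_comm, sub_one_mul_deriv_zpow_mul_sub_one_zpow _ _ hl0 hl1]
  have hpow : l ^ (-((j : ℤ) + 1) - 1) = (l ^ (j + 2))⁻¹ := by
    rw [show -((j : ℤ) + 1) - 1 = -((j + 2 : ℕ) : ℤ) by push_cast; ring, zpow_neg, zpow_natCast]
  rw [hpow]
  push_cast
  field_simp
  ring
end

section
/- For every integer n ≥ 1, Σ_{j=0}^{n-1} 1/C(n-1,j) = (2n/(n+1)) · Σ_{j=0}^{n-1} 1/C(n,j). -/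
/-!
Pascal's rule for reciprocals: `1/C(m+1,j) + 1/C(m+1,j+1) = (m+2)/((m+1) C(m,j))`, because
`C(m+1,j) = (m+1) C(m,j)/(m+1-j)` and `C(m+1,j+1) = (m+1) C(m,j)/(j+1)`. Summing over `j ≤ m`, the two
sums on the left are both `∑_{j ≤ m} 1/C(m+1,j)`, since they differ only by the end terms
`1/C(m+1,0) = 1/C(m+1,m+1) = 1`.
-/

open Finset

variable {K : Type*} [Field K]

theorem sum_range_inv_choose_succ_shift (n : ℕ) :
    ∑ j ∈ range (n + 1), ((n + 1).choose (j + 1) : K)⁻¹ =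
      ∑ j ∈ range (n + 1), ((n + 1).choose j : K)⁻¹ := by
  have hfirst := sum_range_succ' (fun j => ((n + 1).choose j : K)⁻¹) (n + 1)
  have hlast := sum_range_succ (fun j => ((n + 1).choose j : K)⁻¹) (n + 1)
  simp only [Nat.choose_zero_right, Nat.choose_self, Nat.cast_one, inv_one] at hfirst hlast
  linear_combination hlast - hfirst

variable [CharZero K]

theorem inv_choose_succ_add_inv_choose_succ_succ {m j : ℕ} (hj : j ≤ m) :
    ((m + 1).choose j : K)⁻¹ + ((m + 1).choose (j + 1) : K)⁻¹ =
      ((m : K) + 2) / ((m : K) + 1) * (m.choose j : K)⁻¹ := by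
  have hleft : ((m + 1).choose j : K) * ((m : K) + 1 - j) = (m.choose j : K) * ((m : K) + 1) := by
    have h := congrArg (Nat.cast : ℕ → K) (Nat.choose_mul_succ_eq m j)
    push_cast [Nat.le_succ_of_le hj] at h
    linear_combination -h
  have hright : ((m + 1).choose (j + 1) : K) * ((j : K) + 1) = (m.choose j : K) * ((m : K) + 1) := by
    have h := congrArg (Nat.cast : ℕ → K) (Nat.add_one_mul_choose_eq m j)
    push_cast at h
    linear_combination -h
  have hm : (m : K) + 1 ≠ 0 := by exact_mod_cast Nat.succ_ne_zero m
  have ha : (m.choose j : K) * ((m : K) + 1) ≠ 0 :=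
    mul_ne_zero (Nat.cast_ne_zero.mpr (Nat.choose_pos hj).ne') hm
  have hb : ((m + 1).choose j : K)⁻¹ = ((m : K) + 1 - j) / ((m.choose j : K) * ((m : K) + 1)) := by
    rw [eq_div_iff ha, ← hleft, inv_mul_cancel_left₀ (left_ne_zero_of_mul (hleft ▸ ha))]
  have hc : ((m + 1).choose (j + 1) : K)⁻¹ = ((j : K) + 1) / ((m.choose j : K) * ((m : K) + 1)) := by
    rw [eq_div_iff ha, ← hright, inv_mul_cancel_left₀ (left_ne_zero_of_mul (hright ▸ ha))]
  rw [hb, hc, ← add_div]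
  field_simp
  ring

theorem sum_range_inv_choose_eq_mul_sum_range_inv_choose_succ (m : ℕ) :
    ∑ j ∈ range (m + 1), (m.choose j : K)⁻¹ =
      2 * ((m : K) + 1) / ((m : K) + 2) * ∑ j ∈ range (m + 1), ((m + 1).choose j : K)⁻¹ := by
  have hm : (m : K) + 2 ≠ 0 := by exact_mod_cast Nat.succ_ne_zero (m + 1)
  have hpascal : ∀ j ∈ range (m + 1), (m.choose j : K)⁻¹ =
      ((m : K) + 1) / ((m : K) + 2) *
        (((m + 1).choose j : K)⁻¹ + ((m + 1).choose (j + 1) : K)⁻¹) := by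
    intro j hj
    rw [inv_choose_succ_add_inv_choose_succ_succ (Nat.lt_succ_iff.mp (mem_range.mp hj))]
    field_simp
  rw [sum_congr rfl hpascal, ← mul_sum, sum_add_distrib, sum_range_inv_choose_succ_shift]
  ring

theorem stmt_19_general (n : ℕ) :
    ∑ j ∈ Finset.range n, (1 : ℝ) / ((n - 1).choose j : ℝ) =
      (2 * (n : ℝ) / ((n : ℝ) + 1)) * ∑ j ∈ Finset.range n, (1 : ℝ) / (n.choose j : ℝ) := by
  cases n with
  | zero => simp
  | succ m =>
    simp only [one_div, Nat.add_sub_cancel, sum_range_inv_choose_eq_mul_sum_range_inv_choose_succ]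
    push_cast
    ring

theorem stmt_19 (n : ℕ) (hn : 1 ≤ n) :
    ∑ j ∈ Finset.range n, (1 : ℝ) / ((n - 1).choose j : ℝ) =
      (2 * (n : ℝ) / ((n : ℝ) + 1)) * ∑ j ∈ Finset.range n, (1 : ℝ) / (n.choose j : ℝ) :=
  stmt_19_general n
end
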